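/- Let g = u(2) with J = J_{a,b} as above, ω = e^{01} + e^{23}, λ = -e⁰. Then the metric g_{a,b} := -ω ∘ J equals -b(e⁰)² + 2a e⁰e¹ + c(e¹)² + (e²)² + (e³)², where c = -(1+a²)/b; in particular g_{a,b} is (negative or positive) definite if and only if b < 0. -/
import Mathlib


/-!
STATEMENT 16. Let `g = u(2)` with `J = J_{a,b}` as above (`Je₀ = a e₀ + b e₁`,
`Je₁ = c e₀ - a e₁`, `c = -(1+a²)/b`, `b ≠ 0`, `Je₂ = -e₃`, `Je₃ = e₂`), and
`ω = e^{01} + e^{23}` (Lee form `λ = -e⁰`). Then the metric `g_{a,b} := -ω ∘ J` equals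
`-b (e⁰)² + 2a e⁰e¹ + c (e¹)² + (e²)² + (e³)²`; in particular `g_{a,b}` is (negative or
positive) definite if and only if `b < 0`.

Here `(ω ∘ J)(u, v) = ω(u, J v)` (so `g_{a,b}(u,v) = -ω(u, Jv) = ω(Ju, v)` by
`J`-invariance of `ω`), and products of 1-forms denote symmetric products.
-/

namespace Stmt16

def J (a b c : ℝ) (u : Fin 4 → ℝ) : Fin 4 → ℝ :=
  ![a * u 0 + c * u 1, b * u 0 - a * u 1, u 3, -u 2]

/-- `ω = e^{01} + e^{23}`. -/
def ω (u v : Fin 4 → ℝ) : ℝ := u 0 * v 1 - u 1 * v 0 + u 2 * v 3 - u 3 * v 2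

/-- the metric `g_{a,b} = -ω ∘ J`. -/
def met (a b c : ℝ) (u v : Fin 4 → ℝ) : ℝ := -ω u (J a b c v)

end Stmt16

open Stmt16 in
theorem stmt16 (a b c : ℝ) (hb : b ≠ 0) (hc : c = -(1 + a ^ 2) / b) :
    -- g_{a,b} = -b (e⁰)² + 2a e⁰e¹ + c (e¹)² + (e²)² + (e³)² ...
    (∀ u v : Fin 4 → ℝ, met a b c u v =
      -b * (u 0 * v 0) + a * (u 0 * v 1 + u 1 * v 0) + c * (u 1 * v 1)
        + u 2 * v 2 + u 3 * v 3) ∧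
    -- ... and g_{a,b} is definite iff b < 0 :
    (((∀ u : Fin 4 → ℝ, u ≠ 0 → 0 < met a b c u u) ∨
      (∀ u : Fin 4 → ℝ, u ≠ 0 → met a b c u u < 0)) ↔ b < 0) := by
  have hform : ∀ u v : Fin 4 → ℝ, met a b c u v =
      -b * (u 0 * v 0) + a * (u 0 * v 1 + u 1 * v 0) + c * (u 1 * v 1)
        + u 2 * v 2 + u 3 * v 3 := by
    intro u v
    simp only [met, ω, J, Matrix.cons_val_zero, Matrix.cons_val_one, Matrix.head_cons,
      Matrix.cons_val_two, Matrix.cons_val_three, Matrix.tail_cons]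
    ring
  refine ⟨hform, ?_⟩
  constructor
  · rintro (h | h)
    · by_contra hnb
      have hb' : 0 < b := lt_of_le_of_ne (not_lt.mp hnb) (Ne.symm hb)
      have := h ![1, 0, 0, 0] (by
        intro h0
        have := congrFun h0 0
        simp at this)
      rw [hform] at this
      simp at this
      nlinarith
    · have := h ![0, 0, 1, 0] (by
        intro h0
        have := congrFun h0 2
        simp at this)
      rw [hform] at this
      simp at this
      linarith
  · intro hbneg
    have hnb : 0 < -b := by linarith
    left
    intro u hu
    rw [hform]
    have key : (-b) * (-b * (u 0 * u 0) + a * (u 0 * u 1 + u 1 * u 0) + c * (u 1 * u 1)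
        + u 2 * u 2 + u 3 * u 3)
        = ((-b) * u 0 + a * u 1) ^ 2 + u 1 ^ 2 + (-b) * (u 2 ^ 2 + u 3 ^ 2) := by
      rw [hc]
      field_simp
      ring
    have h23 : 0 ≤ (-b) * (u 2 ^ 2 + u 3 ^ 2) := mul_nonneg hnb.le (by positivity)
    have hP : 0 < ((-b) * u 0 + a * u 1) ^ 2 + u 1 ^ 2 + (-b) * (u 2 ^ 2 + u 3 ^ 2) := by
      by_contra hnp
      push_neg at hnp
      have e1 : u 1 ^ 2 = 0 := le_antisymm (by nlinarith [sq_nonneg ((-b) * u 0 + a * u 1)])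
        (sq_nonneg _)
      have h1 : u 1 = 0 := by
        have := pow_eq_zero_iff (n := 2) (by norm_num) |>.mp e1
        exact this
      have e23 : (-b) * (u 2 ^ 2 + u 3 ^ 2) = 0 := le_antisymm
        (by nlinarith [sq_nonneg ((-b) * u 0 + a * u 1), sq_nonneg (u 1)]) h23
      have h23' : u 2 ^ 2 + u 3 ^ 2 = 0 := by
        rcases mul_eq_zero.mp e23 with h | h
        · exact absurd h (by linarith)
        · exact h
      have h2 : u 2 = 0 := by nlinarith [sq_nonneg (u 2), sq_nonneg (u 3)]
      have h3 : u 3 = 0 := by nlinarith [sq_nonneg (u 2), sq_nonneg (u 3)]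
      have es : ((-b) * u 0 + a * u 1) ^ 2 = 0 := by nlinarith [sq_nonneg (u 1)]
      have hs : (-b) * u 0 + a * u 1 = 0 := pow_eq_zero_iff (n := 2) (by norm_num) |>.mp es
      have h0 : u 0 = 0 := by
        rw [h1] at hs
        have : (-b) * u 0 = 0 := by linarith
        rcases mul_eq_zero.mp this with h | h
        · exact absurd h (by linarith)
        · exact h
      exact hu (funext fun i => by fin_cases i <;> simp [h0, h1, h2, h3])
    nlinarith [key, hP, hnb]
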